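/- The intersection of permutohedra equals the permutohedron of the minimal vector: with v^{(−)} defined by partial sums Σ_{i≤k} v_i^{(−)} = min_j Σ_{i≤k} v_i^{(j)} (assumed decreasingly ordered), one has P_{v^{(−)}} = ∩_{j=1}^R P_{v^{(j)}}. -/

import Mathlib

/-- The vector `v` with entries sorted in decreasing order. -/
noncomputable def sortDesc {d : ℕ} (v : Fin d → ℝ) : Fin d → ℝ :=
  fun i => v (Tuple.sort (fun j => -v j) i)

/-- Sum of the `k` largest entries of `v`. -/
noncomputable def psum {d : ℕ} (v : Fin d → ℝ) (k : ℕ) : ℝ :=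
  ∑ i ∈ Finset.univ.filter (fun i : Fin d => (i : ℕ) < k), sortDesc v i

/-- `v ≺ w` : `v` is majorized by `w`. -/
def Majorizes {d : ℕ} (v w : Fin d → ℝ) : Prop :=
  (∀ k : ℕ, k ≤ d → psum v k ≤ psum w k) ∧ ∑ i, v i = ∑ i, w i

/-- Sum of the first `k` entries of `v` (no sorting). -/
noncomputable def rawPsum {d : ℕ} (v : Fin d → ℝ) (k : ℕ) : ℝ :=
  ∑ i ∈ Finset.univ.filter (fun i : Fin d => (i : ℕ) < k), v i

/-- The permutohedron of `w`: the convex hull of all coordinate permutations of `w`. -/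
noncomputable def permutohedron {d : ℕ} (w : Fin d → ℝ) : Set (Fin d → ℝ) :=
  convexHull ℝ {x | ∃ σ : Equiv.Perm (Fin d), x = w ∘ σ}

/-! Rado's theorem `permutohedron w = {x | x ≺ w}` is proved by separation: if `x ≺ w` and `c` is
any linear functional, summation by parts against the decreasing rearrangement of `c` gives
`∑ cᵢ xᵢ ≤ ∑ c↓ᵢ w↓ᵢ`, which is the value of `c` at a vertex of the permutohedron. For decreasing
vectors the sorted partial sums are the raw ones, so `x ≺ v⁻` says exactly that the partial sums
of `x` are below the minimum over `j` of those of `v⁽ʲ⁾`, i.e. that `x ≺ v⁽ʲ⁾` for every `j`. -/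

open Finset

namespace Finset

theorem sum_le_sum_of_card_eq_of_forall_le {ι M : Type*} [AddCommMonoid M] [LinearOrder M]
    [IsOrderedAddMonoid M] {s t : Finset ι} {f : ι → M}
    (hst : #s = #t) (h : ∀ i ∈ s, i ∉ t → ∀ j ∈ t, j ∉ s → f i ≤ f j) :
    ∑ i ∈ s, f i ≤ ∑ i ∈ t, f i := by
  classical
  rcases (t \ s).eq_empty_or_nonempty with hts | hts
  · have hst' : s \ t = ∅ := card_eq_zero.1 (by rw [card_sdiff_comm hst, hts, card_empty])
    rw [← sum_inter_add_sum_sdiff s t, ← sum_inter_add_sum_sdiff t s, hst', hts, inter_comm]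
  set c := (t \ s).inf' hts f
  calc ∑ i ∈ s, f i = ∑ i ∈ s ∩ t, f i + ∑ i ∈ s \ t, f i := (sum_inter_add_sum_sdiff s t f).symm
    _ ≤ ∑ i ∈ t ∩ s, f i + #(t \ s) • c := by
      rw [inter_comm, ← card_sdiff_comm hst]
      gcongr
      refine sum_le_card_nsmul _ _ _ fun i hi => le_inf' hts _ fun j hj => ?_
      rw [mem_sdiff] at hi hj
      exact h i hi.1 hi.2 j hj.1 hj.2
    _ ≤ ∑ i ∈ t ∩ s, f i + ∑ i ∈ t \ s, f i := by
      gcongr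
      exact card_nsmul_le_sum _ _ _ fun j hj => inf'_le f hj
    _ = ∑ i ∈ t, f i := sum_inter_add_sum_sdiff t s f

theorem sum_range_mul_nonpos {R : Type*} [Ring R] [LinearOrder R] [IsOrderedRing R]
    {f g : ℕ → R} {n : ℕ}
    (hf : ∀ i, i + 1 < n → f (i + 1) ≤ f i) (hg : ∀ k ≤ n, ∑ i ∈ range k, g i ≤ 0)
    (hgn : ∑ i ∈ range n, g i = 0) : ∑ i ∈ range n, f i * g i ≤ 0 := by
  rw [← sum_congr rfl fun i _ => smul_eq_mul (f i) (g i), sum_range_by_parts, hgn, smul_zero,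
    zero_sub, neg_nonpos]
  refine sum_nonneg fun i hi => mul_nonneg_of_nonpos_of_nonpos (sub_nonpos.2 (hf i ?_)) (hg _ ?_)
  all_goals rw [mem_range] at hi; omega

end Finset

section Majorization

variable {d : ℕ}

theorem sortDesc_antitone (v : Fin d → ℝ) : Antitone (sortDesc v) := fun _ _ hij =>
  neg_le_neg_iff.1 (Tuple.monotone_sort (fun j => -v j) hij)

theorem sortDesc_eq_self {v : Fin d → ℝ} (hv : Antitone v) : sortDesc v = v := by
  have : Tuple.sort (fun j => -v j) = Equiv.refl _ :=
    Tuple.sort_eq_refl_iff_monotone.2 fun _ _ hij => neg_le_neg (hv hij)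
  ext i
  rw [sortDesc, this, Equiv.refl_apply]

theorem psum_eq_rawPsum {v : Fin d → ℝ} (hv : Antitone v) (k : ℕ) : psum v k = rawPsum v k := by
  rw [psum, sortDesc_eq_self hv, rawPsum]

theorem rawPsum_self (v : Fin d → ℝ) : rawPsum v d = ∑ i, v i := by
  rw [rawPsum, filter_true_of_mem fun i _ => i.isLt]

theorem psum_self (v : Fin d → ℝ) : psum v d = ∑ i, v i := by
  rw [psum, filter_true_of_mem fun i _ => i.isLt]
  exact Equiv.sum_comp _ v

def prefixImage (σ : Equiv.Perm (Fin d)) (k : ℕ) : Finset (Fin d) :=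
  (univ.filter fun i : Fin d => (i : ℕ) < k).map σ.toEmbedding

theorem card_prefixImage (σ : Equiv.Perm (Fin d)) {k : ℕ} (hk : k ≤ d) :
    #(prefixImage σ k) = k := by
  rw [prefixImage, card_map, Fin.card_filter_val_lt, min_eq_right hk]

theorem rawPsum_comp_perm (x : Fin d → ℝ) (σ : Equiv.Perm (Fin d)) (k : ℕ) :
    rawPsum (x ∘ σ) k = ∑ i ∈ prefixImage σ k, x i :=
  (sum_map _ σ.toEmbedding x).symm

theorem sum_le_psum (v : Fin d → ℝ) (S : Finset (Fin d)) : ∑ i ∈ S, v i ≤ psum v #S := by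
  set σ := Tuple.sort fun j => -v j
  rw [show psum v #S = rawPsum (v ∘ σ) #S from rfl, rawPsum_comp_perm]
  refine sum_le_sum_of_card_eq_of_forall_le (card_prefixImage σ (card_finset_fin_le S)).symm ?_
  intro i _ hi j hj _
  obtain ⟨m, hm, rfl⟩ := mem_map.1 hj
  rw [prefixImage, mem_map] at hi
  have hmi : m ≤ σ.symm i := by
    by_contra! hlt
    refine hi ⟨σ.symm i, ?_, σ.apply_symm_apply i⟩
    simp only [mem_filter, mem_univ, true_and] at hm ⊢
    exact (Fin.lt_def.1 hlt).trans hm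
  simpa [sortDesc, σ] using sortDesc_antitone v hmi

theorem rawPsum_comp_perm_le_psum (x : Fin d → ℝ) (σ : Equiv.Perm (Fin d)) {k : ℕ} (hk : k ≤ d) :
    rawPsum (x ∘ σ) k ≤ psum x k := by
  have := sum_le_psum x (prefixImage σ k)
  rwa [card_prefixImage σ hk, ← rawPsum_comp_perm] at this

theorem majorizes_iff_forall_finset {x w : Fin d → ℝ} :
    Majorizes x w ↔
      (∀ S : Finset (Fin d), ∑ i ∈ S, x i ≤ psum w #S) ∧ ∑ i, x i = ∑ i, w i := by
  refine and_congr_left fun _ => ⟨fun h S => (sum_le_psum x S).trans (h _ (card_finset_fin_le S)),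
    fun h k hk => ?_⟩
  have := h (prefixImage (Tuple.sort fun j => -x j) k)
  rwa [card_prefixImage _ hk, ← rawPsum_comp_perm] at this

theorem rawPsum_eq_sum_range (u : Fin d → ℝ) {k : ℕ} (hk : k ≤ d) :
    rawPsum u k = ∑ n ∈ range k, Function.extend Fin.val u 0 n := by
  have : (univ.filter fun i : Fin d => (i : ℕ) < k).map Fin.valEmbedding = range k := by
    ext n
    simp only [mem_map, mem_filter, mem_univ, true_and, Fin.valEmbedding_apply, mem_range]
    exact ⟨fun ⟨i, hi, hin⟩ => hin ▸ hi, fun hn => ⟨⟨n, hn.trans_le hk⟩, hn, rfl⟩⟩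
  rw [← this, sum_map, rawPsum]
  exact sum_congr rfl fun i _ => (Fin.val_injective.extend_apply u 0 i).symm

theorem sum_mul_le_sum_mul_of_rawPsum_le {a y z : Fin d → ℝ} (ha : Antitone a)
    (hyz : ∀ k ≤ d, rawPsum y k ≤ rawPsum z k) (hsum : ∑ i, y i = ∑ i, z i) :
    ∑ i, a i * y i ≤ ∑ i, a i * z i := by
  set E : (Fin d → ℝ) → ℕ → ℝ := fun u => Function.extend Fin.val u 0
  have hE (u : Fin d → ℝ) (i : Fin d) : E u i = u i := Fin.val_injective.extend_apply u 0 i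
  have hpsum (u : Fin d → ℝ) (k : ℕ) (hk : k ≤ d) :
      ∑ n ∈ range k, E u n = rawPsum u k := (rawPsum_eq_sum_range u hk).symm
  rw [← sub_nonpos, ← sum_sub_distrib]
  simp_rw [← mul_sub, ← hE, Fin.sum_univ_eq_sum_range (fun n => E a n * (E y n - E z n))]
  refine sum_range_mul_nonpos (fun i hi => ?_) (fun k hk => ?_) ?_
  · have := ha (Fin.mk_le_mk.2 i.le_succ : (⟨i, i.lt_succ_self.trans hi⟩ : Fin d) ≤ ⟨i + 1, hi⟩)
    rwa [← hE a, ← hE a] at this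
  · rw [sum_sub_distrib, hpsum y k hk, hpsum z k hk, sub_nonpos]
    exact hyz k hk
  · rw [sum_sub_distrib, hpsum y d le_rfl, hpsum z d le_rfl, rawPsum_self, rawPsum_self, hsum,
      sub_self]

theorem exists_perm_sum_mul_le_of_majorizes {x w : Fin d → ℝ} (h : Majorizes x w)
    (c : Fin d → ℝ) : ∃ τ : Equiv.Perm (Fin d), ∑ i, x i * c i ≤ ∑ i, w (τ i) * c i := by
  set σc := Tuple.sort fun j => -c j
  set σw := Tuple.sort fun j => -w j
  -- `τ` moves the `k`-th largest entry of `w` to the position of the `k`-th largest entry of `c`.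
  refine ⟨σc.symm.trans σw, ?_⟩
  rw [← Equiv.sum_comp σc, ← Equiv.sum_comp σc (fun i => w _ * c i)]
  simp only [Equiv.trans_apply, Equiv.symm_apply_apply, mul_comm _ (c (σc _))]
  refine sum_mul_le_sum_mul_of_rawPsum_le (a := sortDesc c) (sortDesc_antitone c)
    (fun k hk => (rawPsum_comp_perm_le_psum x σc hk).trans (h.1 k hk)) ?_
  rw [Equiv.sum_comp σc x, Equiv.sum_comp σw w, h.2]

theorem convex_setOf_majorizes (w : Fin d → ℝ) : Convex ℝ {x | Majorizes x w} := by
  have hlin (S : Finset (Fin d)) : IsLinearMap ℝ fun x : Fin d → ℝ => ∑ i ∈ S, x i :=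
    ⟨fun x y => sum_add_distrib, fun c x => by simp [mul_sum]⟩
  simp only [majorizes_iff_forall_finset, Set.ofPred_and, Set.ofPred_forall]
  exact (convex_iInter fun S => convex_halfSpace_le (hlin S) _).inter
    (convex_hyperplane (hlin univ) _)

theorem permutohedron_subset_setOf_majorizes (w : Fin d → ℝ) :
    permutohedron w ⊆ {x | Majorizes x w} := by
  refine convexHull_min ?_ (convex_setOf_majorizes w)
  rintro _ ⟨σ, rfl⟩
  refine majorizes_iff_forall_finset.2 ⟨fun S => ?_, Equiv.sum_comp σ w⟩
  simpa [sum_map] using sum_le_psum w (S.map σ.toEmbedding)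

theorem mem_permutohedron_of_majorizes {x w : Fin d → ℝ} (h : Majorizes x w) :
    x ∈ permutohedron w := by
  have hfin : {y : Fin d → ℝ | ∃ σ : Equiv.Perm (Fin d), y = w ∘ σ}.Finite := by
    refine (Set.finite_range fun σ : Equiv.Perm (Fin d) => w ∘ σ).subset ?_
    rintro _ ⟨σ, rfl⟩
    exact ⟨σ, rfl⟩
  by_contra hx
  obtain ⟨f, u, hfu, hux⟩ := geometric_hahn_banach_closed_point (convex_convexHull ℝ _)
    (hfin.isClosed_convexHull ℝ) hx
  have hf (y : Fin d → ℝ) : f y = ∑ i, y i * f fun j => if i = j then 1 else 0 := by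
    simpa using LinearMap.pi_apply_eq_sum_univ f.toLinearMap y
  obtain ⟨τ, hτ⟩ := exists_perm_sum_mul_le_of_majorizes h fun i => f fun j => if i = j then 1 else 0
  have hτu := hfu (w ∘ τ) (subset_convexHull ℝ _ ⟨τ, rfl⟩)
  rw [hf] at hux hτu
  exact (hτu.trans (hux.trans_le hτ)).false

theorem permutohedron_eq_setOf_majorizes (w : Fin d → ℝ) :
    permutohedron w = {x | Majorizes x w} :=
  (permutohedron_subset_setOf_majorizes w).antisymm fun _ => mem_permutohedron_of_majorizes

theorem majorizes_iff_forall_of_psum_eq_iInf {ι : Type*} [Finite ι] [Nonempty ι]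
    {u : Fin d → ℝ} {v : ι → Fin d → ℝ} (hpsum : ∀ k ≤ d, psum u k = ⨅ j, psum (v j) k)
    (hsum : ∀ j j', ∑ i, v j i = ∑ i, v j' i) (x : Fin d → ℝ) :
    Majorizes x u ↔ ∀ j, Majorizes x (v j) := by
  have hbdd (k : ℕ) : BddBelow (Set.range fun j => psum (v j) k) := (Set.finite_range _).bddBelow
  have hu (j : ι) : ∑ i, u i = ∑ i, v j i := by
    rw [← psum_self, hpsum d le_rfl]
    simp_rw [psum_self, hsum _ j]
    exact ciInf_const
  constructor
  · rintro ⟨hle, heq⟩ j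
    exact ⟨fun k hk => (hle k hk).trans ((hpsum k hk).trans_le (ciInf_le (hbdd k) j)),
      heq.trans (hu j)⟩
  · intro h
    obtain ⟨j⟩ := ‹Nonempty ι›
    exact ⟨fun k hk => (hpsum k hk) ▸ le_ciInf fun j => (h j).1 k hk, (h j).2.trans (hu j).symm⟩

end Majorization

/-- The intersection of permutohedra of decreasingly ordered vectors with equal total
sums equals the permutohedron of the minimal vector `v⁻`, which is defined by the
pointwise minima of the partial sums (assumed to define a decreasingly ordered
vector). -/
theorem permutohedron_inter_eq_min {d R : ℕ} (hR : 0 < R)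
    (v : Fin R → (Fin d → ℝ)) (hv : ∀ j, Antitone (v j))
    (hsum : ∀ j j', ∑ i, v j i = ∑ i, v j' i)
    (vm : Fin d → ℝ) (hvm : Antitone vm)
    (hvmPsum : ∀ k : ℕ, k ≤ d → rawPsum vm k = ⨅ j : Fin R, rawPsum (v j) k) :
    permutohedron vm = ⋂ j : Fin R, permutohedron (v j) := by
  have : Nonempty (Fin R) := ⟨⟨0, hR⟩⟩
  have hpsum (k : ℕ) (hk : k ≤ d) : psum vm k = ⨅ j, psum (v j) k := by
    simp only [psum_eq_rawPsum hvm, psum_eq_rawPsum (hv _)]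
    exact hvmPsum k hk
  ext x
  simp only [permutohedron_eq_setOf_majorizes, Set.mem_iInter]
  exact majorizes_iff_forall_of_psum_eq_iInf hpsum hsum x
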